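/- There exists a function F : ω^ω → τ_N \ {∅} assigning to each x ∈ ω^ω a nonempty τ_N-open set, satisfying: (1) for all x ∈ ω^ω, Cl_{τ_N}(F(x)) = F(x) ∪ {x}; and (2) for every Souslin scheme W that is a regular open π-base Souslin scheme on the Baire space (ω^ω, τ_N) and has nonempty leaves, there exist p, x ∈ ω^ω such that (i) fruit_p(W) = {x}, (ii) shoot_{p↾n}(W) does not → {x} ∪ F(x) for all n ∈ ω, and (iii) for every regular semi-open Souslin scheme V on (ω^ω, τ_N), if Int(V, τ_N) = W then fruit_p(V) = {x}. -/

import Mathlib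

open Set Topology

universe u v

/-- The restriction `p↾n` of `p : ℕ → ℕ`, as a finite sequence in `ω^{<ω}`. -/
def pre (p : ℕ → ℕ) (n : ℕ) : List ℕ := List.ofFn fun i : Fin n => p i

/-- `a ⊑ p` : the finite sequence `a` is an initial segment of the branch `p`. -/
def IsPre (a : List ℕ) (p : ℕ → ℕ) : Prop := a = pre p a.length

/-- `S_a = {p ∈ ω^ω : a ⊑ p}`, the pieces of the standard Lusin scheme. -/
def stdS (a : List ℕ) : Set (ℕ → ℕ) := {p | IsPre a p}

section scheme

variable {X Y : Type*}

/-- `fruit_p(V) = ⋂_n V_{p↾n}`. -/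
def fruit (V : List ℕ → Set X) (p : ℕ → ℕ) : Set X := ⋂ n, V (pre p n)

/-- `flesh(V) = ⋃_a V_a`. -/
def flesh (V : List ℕ → Set X) : Set X := ⋃ a, V a

/-- The Souslin scheme `V` covers the set `A`. -/
def Covers (V : List ℕ → Set X) (A : Set X) : Prop :=
  V [] = A ∧ ∀ a, V a = ⋃ n, V (a ++ [n])

/-- The Souslin scheme `V` partitions the set `A`. -/
def Partitions (V : List ℕ → Set X) (A : Set X) : Prop :=
  Covers V A ∧ ∀ a, ∀ n m : ℕ, n ≠ m → V (a ++ [n]) ∩ V (a ++ [m]) = ∅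

/-- `V` is complete: every fruit is nonempty. -/
def CompleteScheme (V : List ℕ → Set X) : Prop := ∀ q : ℕ → ℕ, (fruit V q).Nonempty

/-- `V` has strict branches: every fruit is a singleton. -/
def StrictBranches (V : List ℕ → Set X) : Prop := ∀ q : ℕ → ℕ, ∃ x, fruit V q = {x}

/-- `V` is regular: `V_{a⌢n} ⊆ V_a`. -/
def RegularScheme (V : List ℕ → Set X) : Prop := ∀ a n, V (a ++ [n]) ⊆ V a

/-- `V` has nonempty leaves. -/
def NonemptyLeaves (V : List ℕ → Set X) : Prop := ∀ a, (V a).Nonempty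

/-- `V` is an open Souslin scheme with respect to the topology `t`. -/
def OpenScheme (t : TopologicalSpace X) (V : List ℕ → Set X) : Prop := ∀ a, t.IsOpen (V a)

/-- `V` is semi-open with respect to the topology `t`: `V_a ⊆ Cl_t(Int_t(V_a))`. -/
def SemiOpenScheme (t : TopologicalSpace X) (V : List ℕ → Set X) : Prop :=
  ∀ a, V a ⊆ @closure _ t (@interior _ t (V a))

/-- `Ṽ^k_b = ⋃_{j ≥ k} V_{b⌢j}`. -/
def shootSet (V : List ℕ → Set X) (b : List ℕ) (k : ℕ) : Set X :=
  ⋃ j, ⋃ (_ : k ≤ j), V (b ++ [j])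

/-- `shoot_b(V) = {Ṽ^k_b : k ∈ ω}`. -/
def shoot (V : List ℕ → Set X) (b : List ℕ) : Set (Set X) := {G | ∃ k, G = shootSet V b k}

/-- `γ → U`: some member of the family `γ` is contained in `U`. -/
def Engulfs (γ : Set (Set X)) (U : Set X) : Prop := ∃ G ∈ γ, G ⊆ U

/-- `p →_V U`: there is an infinite `L ⊆ ω` with `shoot_{p↾n}(V) → U` for all `n ∈ L`. -/
def ArrowSeq (V : List ℕ → Set X) (p : ℕ → ℕ) (U : Set X) : Prop :=
  ∃ L : Set ℕ, L.Infinite ∧ ∀ n ∈ L, Engulfs (shoot V (pre p n)) U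

/-- `p →_{V,t} x`: `p →_V U` for every `t`-open `U` containing `x`. -/
def ArrowPt (t : TopologicalSpace X) (V : List ℕ → Set X) (p : ℕ → ℕ) (x : X) : Prop :=
  ∀ U : Set X, t.IsOpen U → x ∈ U → ArrowSeq V p U

/-- `V` is a Lusin π-base for `(X, t)`. -/
def LusinPiBase (t : TopologicalSpace X) (V : List ℕ → Set X) : Prop :=
  OpenScheme t V ∧ Partitions V Set.univ ∧ StrictBranches V ∧
    ∀ x : X, ∀ U : Set X, t.IsOpen U → x ∈ U →
      ∃ a : List ℕ, ∃ n : ℕ, x ∈ V a ∧ shootSet V a n ⊆ U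

/-- `V` is an α-scheme for `(X, t)`. -/
def AlphaScheme (t : TopologicalSpace X) (V : List ℕ → Set X) : Prop :=
  OpenScheme t V ∧ CompleteScheme V ∧ Covers V Set.univ ∧
    (∀ a : List ℕ, ∀ x ∈ V a, ∃ p : ℕ → ℕ, IsPre a p ∧ x ∈ fruit V p ∧ ArrowPt t V p x) ∧
    (∀ p : ℕ → ℕ, ∃ x ∈ fruit V p, ArrowPt t V p x)

/-- `V` is a ramose α-scheme for `(X, t)`. -/
def RamoseAlphaScheme (t : TopologicalSpace X) (V : List ℕ → Set X) : Prop :=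
  AlphaScheme t V ∧ ∀ a : List ℕ, ∀ x ∈ V a,
    Cardinal.mk {p : ℕ → ℕ // IsPre a p ∧ x ∈ fruit V p ∧ ArrowPt t V p x} = Cardinal.continuum

/-- `γ` is a π-base for `(X, t)`. -/
def PiBase (t : TopologicalSpace X) (γ : Set (Set X)) : Prop :=
  (∀ G ∈ γ, G.Nonempty ∧ t.IsOpen G) ∧
    ∀ U : Set X, t.IsOpen U → U.Nonempty → ∃ G ∈ γ, G ⊆ U

/-- `γ` is a π-net for the subspace `A` of `(X, t)`. -/
def PiNetFor (t : TopologicalSpace X) (γ : Set (Set X)) (A : Set X) : Prop :=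
  (∀ G ∈ γ, G.Nonempty) ∧
    ∀ U : Set X, t.IsOpen U → (U ∩ A).Nonempty → ∃ G ∈ γ, G ⊆ U ∩ A

/-- `V` is a π-base Souslin scheme on `(X, t)`:
an open scheme such that `{V_b : a ⊑ b}` is a π-net for the subspace `V_a`, for each `a`. -/
def PiBaseScheme (t : TopologicalSpace X) (V : List ℕ → Set X) : Prop :=
  OpenScheme t V ∧ ∀ a, PiNetFor t {S | ∃ b, a <+: b ∧ S = V b} (V a)

/-- `(X, t)` is a π-space. -/
def PiSpace (t : TopologicalSpace X) : Prop :=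
  ∃ V : List ℕ → Set X, OpenScheme t V ∧ Partitions V Set.univ ∧ StrictBranches V ∧
    PiBase t {S | ∃ a, S = V a}

/-- `(X, t)` is zero-dimensional: it has a base consisting of clopen sets. -/
def ZeroDimT (t : TopologicalSpace X) : Prop :=
  ∀ U : Set X, t.IsOpen U → ∀ x ∈ U, ∃ C : Set X, t.IsOpen C ∧ @IsClosed _ t C ∧ x ∈ C ∧ C ⊆ U

/-- `branches_V(x) = {q ∈ ω^ω : x ∈ fruit_q(V)}`. -/
def branches (V : List ℕ → Set X) (x : X) : Set (ℕ → ℕ) := {q | x ∈ fruit V q}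

/-- `f` is a selector on `V`: a surjection of `ω^ω` onto `flesh(V)` such that each fiber
`f⁻¹(x)` is a dense subset of the subspace `branches_V(x)` of the Baire space. -/
def IsSelector (V : List ℕ → Set X) (f : (ℕ → ℕ) → X) : Prop :=
  (∀ p, f p ∈ flesh V) ∧ (∀ x ∈ flesh V, ∃ p, f p = x) ∧
    ∀ x ∈ flesh V, f ⁻¹' {x} ⊆ branches V x ∧ branches V x ⊆ closure (f ⁻¹' {x})

/-- The topology `σ_{t,f}` on `ω^ω` generated by the subbase
`{f⁻¹[U] : U ∈ t} ∪ {S_a : a ∈ ω^{<ω}}`. -/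
def sigmaTop (t : TopologicalSpace X) (f : (ℕ → ℕ) → X) : TopologicalSpace (ℕ → ℕ) :=
  TopologicalSpace.generateFrom
    ({S | ∃ U : Set X, t.IsOpen U ∧ S = f ⁻¹' U} ∪ {S | ∃ a : List ℕ, S = stdS a})

end scheme

/-- `(ω^ω, t)` is a standard π-space: the family `τ_N \ {∅}` of nonempty open sets of the
Baire space is a π-base for `(ω^ω, t)`. -/
def StandardPiSpace (t : TopologicalSpace (ℕ → ℕ)) : Prop :=
  (∀ U : Set (ℕ → ℕ), IsOpen U → U.Nonempty → t.IsOpen U) ∧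
    ∀ U : Set (ℕ → ℕ), t.IsOpen U → U.Nonempty → ∃ G : Set (ℕ → ℕ), IsOpen G ∧ G.Nonempty ∧ G ⊆ U

/-!
A play descends along a regular π-base scheme `W` while shrinking Baire cylinders inside the
current node; it produces a branch `p` whose node closures shrink to a point `x`, whence
`fruit_p(W) = {x}`, and `fruit_p(V) = {x}` for every semi-open `V` with interior `W`, since
`V_a ⊆ Cl(W_a)`. Appending free digits to the cylinders gives continuum many such points, and there
are only continuum many schemes, so distinct schemes can be given distinct points. Every shoot
along `p` meets a countable set `A` accumulating only at `x`; a union `F(x)` of clopen cylinders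
converging to `x` and avoiding `A` then satisfies `Cl(F(x)) = F(x) ∪ {x}`, and no shoot along `p`
fits into `{x} ∪ F(x)`.
-/

open Cardinal PiNat Filter Function

section Cylinders

lemma length_pre (p : ℕ → ℕ) (n : ℕ) : (pre p n).length = n := List.length_ofFn

lemma isPre_iff {a : List ℕ} {p : ℕ → ℕ} : IsPre a p ↔ ∀ i (h : i < a.length), a[i] = p i := by
  refine ⟨fun h i hi => ?_, fun h => List.ext_getElem (length_pre p _).symm fun i h₁ _ => ?_⟩
  · rw [List.getElem_of_eq h]; simp [pre]
  · simp [pre, h i h₁]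

lemma isPre_pre (p : ℕ → ℕ) (n : ℕ) : IsPre (pre p n) p := by
  rw [isPre_iff]; simp [pre]

lemma pre_prefix_pre (p : ℕ → ℕ) {m n : ℕ} (h : m ≤ n) : pre p m <+: pre p n := by
  rw [List.prefix_iff_eq_take]
  exact List.ext_getElem (by simp [length_pre, h]) fun i _ _ => by simp [pre]

lemma IsPre.prefix_pre {a : List ℕ} {p : ℕ → ℕ} (h : IsPre a p) {n : ℕ} (hn : a.length ≤ n) :
    a <+: pre p n :=
  h ▸ pre_prefix_pre p hn

lemma IsPre.of_prefix {a b : List ℕ} {p : ℕ → ℕ} (hab : a <+: b) (h : IsPre b p) : IsPre a p := by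
  rw [isPre_iff] at h ⊢
  exact fun i hi => (hab.getElem hi).trans (h i (hi.trans_le hab.length_le))

lemma IsPre.pre_prefix {a : List ℕ} {p : ℕ → ℕ} (h : IsPre a p) {n : ℕ} (hn : n ≤ a.length) :
    pre p n <+: a := by
  rw [h]; exact pre_prefix_pre p hn

lemma stdS_anti {a b : List ℕ} (hab : a <+: b) : stdS b ⊆ stdS a := fun _ => IsPre.of_prefix hab

lemma stdS_pre (p : ℕ → ℕ) (n : ℕ) : stdS (pre p n) = cylinder p n := by
  ext y
  simp [stdS, isPre_iff, mem_cylinder_iff, pre, eq_comm]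

lemma stdS_eq_cylinder (a : List ℕ) : stdS a = cylinder (fun i => a.getD i 0) a.length := by
  have : IsPre a fun i => a.getD i 0 := isPre_iff.2 fun i hi => (List.getD_eq_getElem _ _ hi).symm
  conv_lhs => rw [this, stdS_pre]

lemma isOpen_stdS (a : List ℕ) : IsOpen (stdS a) := by
  rw [stdS_eq_cylinder]; exact isOpen_cylinder (E := fun _ => ℕ) _ _

lemma isClosed_stdS (a : List ℕ) : IsClosed (stdS a) := by
  rw [stdS_eq_cylinder, cylinder_eq_pi]; exact isClosed_set_pi fun _ _ => isClosed_singleton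

lemma nonempty_stdS (a : List ℕ) : (stdS a).Nonempty := by
  rw [stdS_eq_cylinder]; exact ⟨_, self_mem_cylinder _ _⟩

lemma isClosed_cylinder (x : ℕ → ℕ) (n : ℕ) : IsClosed (cylinder x n) := by
  rw [← stdS_pre]; exact isClosed_stdS _

lemma hasBasis_nhds_cylinder (x : ℕ → ℕ) : (𝓝 x).HasBasis (fun _ => True) (cylinder x) := by
  refine ⟨fun U => ⟨fun hU => ?_, fun ⟨n, _, hn⟩ => mem_of_superset
    ((isOpen_cylinder (E := fun _ => ℕ) x n).mem_nhds (self_mem_cylinder x n)) hn⟩⟩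
  obtain ⟨_, ⟨y, n, rfl⟩, hx, hU⟩ := (isTopologicalBasis_cylinders fun _ => ℕ).mem_nhds_iff.1 hU
  exact ⟨n, trivial, (mem_cylinder_iff_eq.1 hx).symm ▸ hU⟩

lemma iInter_cylinder (x : ℕ → ℕ) : ⋂ n, cylinder x n = {x} := by
  refine Set.Subset.antisymm (fun y hy => funext fun i => ?_) (by simp)
  exact mem_cylinder_iff.1 (Set.mem_iInter.1 hy (i + 1)) i i.lt_succ_self

lemma exists_pre_subset {U : Set (ℕ → ℕ)} (hU : IsOpen U) {y : ℕ → ℕ} (hy : y ∈ U) (m : ℕ) :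
    ∃ n, m ≤ n ∧ stdS (pre y n) ⊆ U := by
  obtain ⟨n, -, hn⟩ := (hasBasis_nhds_cylinder y).mem_iff.1 (hU.mem_nhds hy)
  exact ⟨max n m, le_max_right n m, stdS_pre y _ ▸ (cylinder_anti y (le_max_left n m)).trans hn⟩

lemma exists_isPre_of_chain {u : ℕ → List ℕ} (hu : ∀ s, u s <+: u (s + 1))
    (hlen : ∀ s, s ≤ (u s).length) : ∃ p, ∀ s, IsPre (u s) p := by
  have hmono := Nat.rel_of_forall_rel_succ_of_le _ hu
  refine ⟨fun n => (u (n + 1)).getD n 0, fun s => isPre_iff.2 fun i hi => ?_⟩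
  have hi' : i < (u (i + 1)).length := hlen (i + 1)
  rw [List.getD_eq_getElem _ _ hi']
  rcases le_total s (i + 1) with h | h
  exacts [(hmono h).getElem hi, ((hmono h).getElem hi').symm]

lemma eq_of_forall_isPre {u : ℕ → List ℕ} (hlen : ∀ s, s ≤ (u s).length) {y z : ℕ → ℕ}
    (hy : ∀ s, IsPre (u s) y) (hz : ∀ s, IsPre (u s) z) : y = z :=
  funext fun i =>
    (isPre_iff.1 (hy (i + 1)) i (hlen _)).symm.trans (isPre_iff.1 (hz (i + 1)) i (hlen _))

lemma apply_length_eq_of_isPre_append {d : List ℕ} {e : ℕ} {y : ℕ → ℕ} (h : IsPre (d ++ [e]) y) :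
    y d.length = e := by
  simpa using (isPre_iff.1 h d.length (by simp)).symm

lemma mk_nat_arrow_nat : #(ℕ → ℕ) = 𝔠 := by
  rw [← power_def, mk_nat, aleph0_power_aleph0]

lemma not_countable_of_isOpen {U : Set (ℕ → ℕ)} (hU : IsOpen U) (hne : U.Nonempty) :
    ¬ U.Countable := by
  intro hc
  obtain ⟨q, hq⟩ := hne
  obtain ⟨n, -, hn⟩ := (hasBasis_nhds_cylinder q).mem_iff.1 (hU.mem_nhds hq)
  let shift : (ℕ → ℕ) → U := fun ε =>
    ⟨fun i => if i < n then q i else ε (i - n), hn (mem_cylinder_iff.2 fun i hi => by simp [hi])⟩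
  have hshift : Injective shift := fun ε ε' h => funext fun j => by
    simpa [shift] using congrFun (congrArg Subtype.val h) (j + n)
  have : Countable (ℕ → ℕ) := @Injective.countable _ _ hc.to_subtype _ hshift
  exact (mk_le_aleph0_iff.2 this).not_gt (mk_nat_arrow_nat ▸ aleph0_lt_continuum)

end Cylinders

section Accumulation

variable {X : Type*} [TopologicalSpace X] [T1Space X]

lemma IsClosed.insert {s : Set X} (hs : IsClosed s) (x : X) : IsClosed (insert x s) := by
  rw [Set.insert_eq]; exact isClosed_singleton.union hs

lemma isClosed_insert_iUnion {x : X} {B C : ℕ → Set X} (hB : ∀ n, IsClosed (insert x (B n)))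
    (hBC : ∀ n, B n ⊆ C n) (hC : Antitone C) (hCc : ∀ n, IsClosed (C n)) (hCx : ⋂ n, C n ⊆ {x}) :
    IsClosed (insert x (⋃ n, B n)) := by
  refine isClosed_of_closure_subset fun y hy => ?_
  by_contra hyB
  have hyx : y ≠ x := fun h => hyB (h ▸ Set.mem_insert _ _)
  obtain ⟨N, hyN⟩ : ∃ N, y ∉ C N := by
    by_contra! h
    exact hyx (hCx (Set.mem_iInter.2 h))
  have hsub : insert x (⋃ n, B n) ⊆ (⋃ n ∈ Set.Iio N, insert x (B n)) ∪ insert x (C N) := by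
    refine Set.insert_subset (Or.inr (Set.mem_insert _ _)) (Set.iUnion_subset fun n z hz => ?_)
    rcases lt_or_ge n N with hn | hn
    · exact Or.inl (Set.mem_biUnion hn (Set.mem_insert_of_mem _ hz))
    · exact Or.inr (Set.mem_insert_of_mem _ (hC hn (hBC n hz)))
  have hclosed : IsClosed ((⋃ n ∈ Set.Iio N, insert x (B n)) ∪ insert x (C N)) :=
    ((Set.finite_Iio N).isClosed_biUnion fun n _ => hB n).union
      ((hCc N).insert x)
  rcases hclosed.closure_subset_iff.2 hsub hy with hy | hy
  · obtain ⟨n, -, hn⟩ := Set.mem_iUnion₂.1 hy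
    exact hyB (Set.insert_subset_insert (Set.subset_iUnion B n) hn)
  · exact hy.elim hyx hyN

/-- Either some `y ≠ x` lies in every `closure (T k)`, and points of `T k` converging to `y` do,
or no such `y` exists, and then any choice of points of `T k \ {x}` accumulates only at `x`. -/
lemma exists_countable_inter_nonempty_of_antitone [T2Space X] [FirstCountableTopology X] {x : X}
    {T : ℕ → Set X} (hT : Antitone T) (hTx : ∀ k, (T k \ {x}).Nonempty) :
    ∃ B : Set X, B.Countable ∧ x ∉ B ∧ IsClosed (insert x B) ∧ B ⊆ closure (T 0) ∧
      ∀ k, (T k ∩ B).Nonempty := by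
  have hT0 : ∀ {z} k, z ∈ T k → z ∈ closure (T 0) := fun k hz => subset_closure (hT k.zero_le hz)
  by_cases h : ∃ y ∈ ⋂ k, closure (T k), y ≠ x
  · obtain ⟨y, hy, hyx⟩ := h
    obtain ⟨u, hu⟩ := (𝓝 y).exists_antitone_basis
    have hmeet : ∀ k, ∃ z ∈ T k, z ∈ u k ∧ z ≠ x := fun k => by
      obtain ⟨z, ⟨hzu, hzx⟩, hzT⟩ := mem_closure_iff_nhds.1 (Set.mem_iInter.1 hy k) _
        (inter_mem (hu.mem k) (isOpen_compl_singleton.mem_nhds hyx))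
      exact ⟨z, hzT, hzu, hzx⟩
    choose z hzT hzu hzx using hmeet
    have hlim : Tendsto z atTop (𝓝 y) := hu.tendsto hzu
    refine ⟨insert y (Set.range z), (Set.countable_range z).insert y, ?_,
      hlim.isCompact_insert_range.isClosed.insert x,
      Set.insert_subset (Set.mem_iInter.1 hy 0) (Set.range_subset_iff.2 fun k => hT0 k (hzT k)),
      fun k => ⟨z k, hzT k, Set.mem_insert_of_mem _ (Set.mem_range_self k)⟩⟩
    rintro (h | ⟨k, hk⟩)
    exacts [hyx h.symm, hzx k hk]
  · push Not at h
    choose z hzT hzx using hTx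
    refine ⟨Set.range z, Set.countable_range z, fun ⟨k, hk⟩ => hzx k hk, ?_,
      Set.range_subset_iff.2 fun k => hT0 k (hzT k), fun k => ⟨z k, hzT k, Set.mem_range_self k⟩⟩
    rw [← Set.iUnion_singleton_eq_range]
    exact isClosed_insert_iUnion (C := fun k => closure (T k))
      (fun k => (Set.toFinite _).isClosed)
      (fun k => Set.singleton_subset_iff.2 (subset_closure (hzT k)))
      (fun _ _ hkl => closure_mono (hT hkl)) (fun _ => isClosed_closure) h

end Accumulation

/-- `F` is a union of clopen cylinders, one inside each `cylinder x m` and off `insert x A`. -/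
lemma exists_isOpen_closure_eq_union_singleton {x : ℕ → ℕ} {A : Set (ℕ → ℕ)} (hA : A.Countable)
    (hAx : IsClosed (insert x A)) :
    ∃ F, IsOpen F ∧ F.Nonempty ∧ closure F = F ∪ {x} ∧ Disjoint F A := by
  have hpiece : ∀ m, ∃ P, IsClosed P ∧ IsOpen P ∧ P.Nonempty ∧ P ⊆ cylinder x m ∧
      Disjoint P (insert x A) := fun m => by
    obtain ⟨q, hq⟩ : (cylinder x m \ insert x A).Nonempty := Set.nonempty_of_not_subset fun h =>
      not_countable_of_isOpen (isOpen_cylinder (E := fun _ => ℕ) x m) ⟨x, self_mem_cylinder x m⟩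
        ((hA.insert x).mono h)
    obtain ⟨n, -, hn⟩ := (hasBasis_nhds_cylinder q).mem_iff.1
      (((isOpen_cylinder (E := fun _ => ℕ) x m).sdiff hAx).mem_nhds hq)
    exact ⟨cylinder q n, isClosed_cylinder q n, isOpen_cylinder (E := fun _ => ℕ) q n,
      ⟨q, self_mem_cylinder q n⟩, hn.trans Set.sdiff_subset,
      Set.disjoint_left.2 fun z hz => (hn hz).2⟩
  choose P hPc hPo hPne hPx hPA using hpiece
  refine ⟨⋃ m, P m, isOpen_iUnion hPo, (hPne 0).mono (Set.subset_iUnion P 0), ?_,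
    Set.disjoint_iUnion_left.2 fun m => (hPA m).mono_right (Set.subset_insert x A)⟩
  refine Set.Subset.antisymm ?_ (Set.union_subset subset_closure (Set.singleton_subset_iff.2 ?_))
  · rw [Set.union_comm, ← Set.insert_eq]
    exact closure_minimal (Set.subset_insert _ _) <| isClosed_insert_iUnion
      (fun m => (hPc m).insert x) hPx (fun _ _ h => cylinder_anti x h)
      (isClosed_cylinder x) (iInter_cylinder x).subset
  · exact mem_closure_iff_nhds_basis' (hasBasis_nhds_cylinder x) |>.2 fun m _ =>
      let ⟨z, hz⟩ := hPne m
      ⟨z, hPx m hz, Set.mem_iUnion_of_mem m hz⟩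

section Schemes

variable {X : Type*} {V W : List ℕ → Set X}

lemma RegularScheme.anti (hV : RegularScheme V) {a b : List ℕ} (hab : a <+: b) : V b ⊆ V a := by
  obtain ⟨t, rfl⟩ := hab
  induction t using List.reverseRecOn with
  | nil => simp
  | append_singleton t j ih => exact (List.append_assoc a t [j] ▸ hV (a ++ t) j).trans ih

lemma subset_shootSet (b : List ℕ) (k : ℕ) : V (b ++ [k]) ⊆ shootSet V b k :=
  Set.subset_iUnion₂_of_subset k le_rfl le_rfl

lemma shootSet_antitone (b : List ℕ) : Antitone (shootSet V b) := fun _ _ hkl =>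
  Set.iUnion₂_mono' fun j hj => ⟨j, hkl.trans hj, le_rfl⟩

lemma RegularScheme.shootSet_subset (hV : RegularScheme V) (b : List ℕ) (k : ℕ) :
    shootSet V b k ⊆ V b :=
  Set.iUnion₂_subset fun j _ => hV b j

lemma not_engulfs_shoot {U A : Set X} {b : List ℕ} (hA : ∀ k, (shootSet V b k ∩ A).Nonempty)
    (hUA : Disjoint U A) : ¬ Engulfs (shoot V b) U := by
  rintro ⟨_, ⟨k, rfl⟩, hk⟩
  obtain ⟨z, hzk, hzA⟩ := hA k
  exact Set.disjoint_left.1 hUA (hk hzk) hzA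

variable [TopologicalSpace X]

def Pins (W : List ℕ → Set X) (p : ℕ → ℕ) (x : X) : Prop :=
  x ∈ fruit W p ∧ fruit (fun a => closure (W a)) p ⊆ {x}

variable {p : ℕ → ℕ} {x : X}

lemma Pins.fruit_eq (h : Pins W p x) : fruit W p = {x} :=
  Set.Subset.antisymm
    (fun _ hy => h.2 (Set.mem_iInter.2 fun n => subset_closure (Set.mem_iInter.1 hy n)))
    (Set.singleton_subset_iff.2 h.1)

lemma Pins.fruit_eq_of_interior_eq (h : Pins W p x) (hV : SemiOpenScheme inferInstance V)
    (hVW : ∀ a, interior (V a) = W a) : fruit V p = {x} := by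
  refine Set.Subset.antisymm (fun y hy => h.2 (Set.mem_iInter.2 fun n => ?_))
    (Set.singleton_subset_iff.2 (Set.mem_iInter.2 fun n => ?_))
  · simpa only [hVW] using hV _ (Set.mem_iInter.1 hy n)
  · exact interior_subset (hVW _ ▸ Set.mem_iInter.1 h.1 n)

end Schemes

lemma Pins.exists_countable_inter_shootSet_nonempty {W : List ℕ → Set (ℕ → ℕ)} {p x : ℕ → ℕ}
    (hp : Pins W p x) (hreg : RegularScheme W) (hopen : OpenScheme inferInstance W)
    (hne : NonemptyLeaves W) :
    ∃ A : Set (ℕ → ℕ), A.Countable ∧ x ∉ A ∧ IsClosed (insert x A) ∧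
      ∀ n k, (shootSet W (pre p n) k ∩ A).Nonempty := by
  have hT : ∀ n k, (shootSet W (pre p n) k \ {x}).Nonempty := fun n k =>
    Set.nonempty_of_not_subset fun h => not_countable_of_isOpen (hopen _) (hne _)
      ((Set.countable_singleton x).mono ((subset_shootSet _ k).trans h))
  choose B hBc hBx hBcl hB0 hBT using fun n =>
    exists_countable_inter_nonempty_of_antitone (shootSet_antitone (pre p n)) (hT n)
  refine ⟨⋃ n, B n, Set.countable_iUnion hBc, by simpa using hBx,
    isClosed_insert_iUnion hBcl (C := fun n => closure (W (pre p n)))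
      (fun n => (hB0 n).trans (closure_mono (hreg.shootSet_subset _ _)))
      (fun _ _ h => closure_mono (hreg.anti (pre_prefix_pre p h))) (fun _ => isClosed_closure) hp.2,
    fun n k => (hBT n k).mono (Set.inter_subset_inter_right _ (Set.subset_iUnion B n))⟩

section Game

variable {W : List ℕ → Set (ℕ → ℕ)}

lemma PiBaseScheme.nonempty (hW : PiBaseScheme inferInstance W) (a : List ℕ) : (W a).Nonempty :=
  (hW.2 a).1 _ ⟨a, List.prefix_refl a, rfl⟩

/-- Positions are pairs `(a, c)` of a node of `W` and a cylinder `stdS c ⊆ W a`. -/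
def IsMove (W : List ℕ → Set (ℕ → ℕ)) (σ τ : List ℕ × List ℕ) : Prop :=
  σ.1 <+: τ.1 ∧ σ.1.length < τ.1.length ∧ W τ.1 ⊆ stdS σ.2 ∧ σ.2 <+: τ.2 ∧ stdS τ.2 ⊆ W τ.1

lemma PiBaseScheme.exists_isMove (hreg : RegularScheme W) (hW : PiBaseScheme inferInstance W)
    {σ : List ℕ × List ℕ} (hσ : stdS σ.2 ⊆ W σ.1) : ∃ τ, IsMove W σ τ := by
  obtain ⟨a, c⟩ := σ
  obtain ⟨_, ⟨b, hab, rfl⟩, hb⟩ := (hW.2 a).2 (stdS c) (isOpen_stdS c)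
    (by rw [Set.inter_eq_left.2 hσ]; exact nonempty_stdS c)
  have hbc : W (b ++ [0]) ⊆ stdS c := (hreg b 0).trans (hb.trans Set.inter_subset_left)
  obtain ⟨y, hy⟩ := hW.nonempty (b ++ [0])
  obtain ⟨n, hn, hny⟩ := exists_pre_subset (hW.1 _) hy c.length
  refine ⟨(b ++ [0], pre y n), hab.trans (List.prefix_append _ _), ?_, hbc,
    (hbc hy : IsPre c y).prefix_pre hn, hny⟩
  simpa using hab.length_le.trans_lt (Nat.lt_succ_self _)

lemma pins_of_nested (hreg : RegularScheme W) {a c : ℕ → List ℕ} {p x : ℕ → ℕ}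
    (hac : ∀ s, stdS (c s) ⊆ W (a s)) (hca : ∀ s, W (a (s + 1)) ⊆ stdS (c s))
    (ha : ∀ s, s ≤ (a s).length) (hc : ∀ s, s ≤ (c s).length) (hp : ∀ s, IsPre (a s) p)
    (hx : ∀ s, IsPre (c s) x) : Pins W p x := by
  refine ⟨Set.mem_iInter.2 fun n => hreg.anti ((hp n).pre_prefix (ha n)) (hac n (hx n)),
    fun y hy => eq_of_forall_isPre hc (fun s => ?_) hx⟩
  have hys := Set.mem_iInter.1 hy (a (s + 1)).length
  rw [← hp (s + 1)] at hys
  exact (isClosed_stdS _).closure_subset_iff.2 (hca s) hys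

/-- Appending the digits of `ε` to the cylinders makes the limit point determine `ε`. -/
def play (next : List ℕ × List ℕ → List ℕ × List ℕ) (start : List ℕ × List ℕ) (ε : ℕ → ℕ) :
    ℕ → List ℕ × List ℕ
  | 0 => start
  | s + 1 => ((next (play next start ε s)).1, (next (play next start ε s)).2 ++ [ε s])

variable {next : List ℕ × List ℕ → List ℕ × List ℕ} {start : List ℕ × List ℕ}

lemma play_congr {ε ε' : ℕ → ℕ} {s : ℕ} (h : ∀ i < s, ε i = ε' i) :
    play next start ε s = play next start ε' s := by
  induction s with
  | zero => rfl
  | succ s ih =>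
    simp only [play, ih fun i hi => h i (hi.trans s.lt_succ_self), h s s.lt_succ_self]

lemma eq_of_isPre_play {ε ε' x : ℕ → ℕ} (hx : ∀ s, IsPre (play next start ε s).2 x)
    (hx' : ∀ s, IsPre (play next start ε' s).2 x) : ε = ε' := by
  by_contra hne
  have hdiff : ∃ s, ε s ≠ ε' s := Function.ne_iff.1 hne
  have hagree : play next start ε (Nat.find hdiff) = play next start ε' (Nat.find hdiff) :=
    play_congr fun i hi => not_not.1 (Nat.find_min hdiff hi)
  have h₁ := apply_length_eq_of_isPre_append (hx (Nat.find hdiff + 1))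
  have h₂ := apply_length_eq_of_isPre_append (hx' (Nat.find hdiff + 1))
  simp only [hagree] at h₁ h₂
  exact Nat.find_spec hdiff (h₁.symm.trans h₂)

lemma stdS_play_subset (hnext : ∀ σ, stdS σ.2 ⊆ W σ.1 → IsMove W σ (next σ))
    (hstart : stdS start.2 ⊆ W start.1) (ε : ℕ → ℕ) (s : ℕ) :
    stdS (play next start ε s).2 ⊆ W (play next start ε s).1 := by
  induction s with
  | zero => exact hstart
  | succ s ih => exact (stdS_anti (List.prefix_append _ _)).trans (hnext _ ih).2.2.2.2

lemma length_play (hnext : ∀ σ, stdS σ.2 ⊆ W σ.1 → IsMove W σ (next σ))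
    (hstart : stdS start.2 ⊆ W start.1) (ε : ℕ → ℕ) (s : ℕ) :
    s ≤ (play next start ε s).1.length ∧ s ≤ (play next start ε s).2.length := by
  induction s with
  | zero => simp
  | succ s ih =>
    have hmove := hnext _ (stdS_play_subset hnext hstart ε s)
    have := hmove.2.1
    have := hmove.2.2.2.1.length_le
    simp only [play, List.length_append, List.length_singleton]
    omega

lemma exists_pins_play (hreg : RegularScheme W)
    (hnext : ∀ σ, stdS σ.2 ⊆ W σ.1 → IsMove W σ (next σ)) (hstart : stdS start.2 ⊆ W start.1)
    (ε : ℕ → ℕ) :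
    ∃ p x, Pins W p x ∧ ∀ s, IsPre (play next start ε s).2 x := by
  have hinv := stdS_play_subset hnext hstart ε
  have hmove s := hnext _ (hinv s)
  have hlen := length_play hnext hstart ε
  obtain ⟨p, hp⟩ := exists_isPre_of_chain (u := fun s => (play next start ε s).1)
    (fun s => (hmove s).1) (fun s => (hlen s).1)
  obtain ⟨x, hx⟩ := exists_isPre_of_chain (u := fun s => (play next start ε s).2)
    (fun s => (hmove s).2.2.2.1.trans (List.prefix_append _ _)) (fun s => (hlen s).2)
  exact ⟨p, x, pins_of_nested hreg hinv (fun s => (hmove s).2.2.1)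
    (fun s => (hlen s).1) (fun s => (hlen s).2) hp hx, hx⟩

end Game

lemma PiBaseScheme.exists_injective_pins {W : List ℕ → Set (ℕ → ℕ)} (hreg : RegularScheme W)
    (hW : PiBaseScheme inferInstance W) :
    ∃ f : (ℕ → ℕ) → ℕ → ℕ, Injective f ∧ ∀ ε, ∃ p, Pins W p (f ε) := by
  obtain ⟨y, hy⟩ := hW.nonempty []
  obtain ⟨n, -, hn⟩ := exists_pre_subset (hW.1 []) hy 0
  choose! next hnext using fun (σ : List ℕ × List ℕ) (hσ : stdS σ.2 ⊆ W σ.1) =>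
    hW.exists_isMove hreg hσ
  choose p x hpx hx using exists_pins_play (start := ([], pre y n)) hreg hnext hn
  exact ⟨x, fun ε ε' h => eq_of_isPre_play (hx ε) (h ▸ hx ε'), fun ε => ⟨p ε, hpx ε⟩⟩

/-- Distinct representatives for a family of sets each at least as large as the index type:
choose them by transfinite recursion along a well-order whose initial segments are smaller. -/
theorem exists_injective_forall_mem {ι α : Type u} (s : ι → Set α) (hs : ∀ i, #ι ≤ #(s i)) :
    ∃ f : ι → α, Injective f ∧ ∀ i, f i ∈ s i := by
  obtain ⟨r, _, hr⟩ := Cardinal.exists_ord_eq ι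
  have hfresh : ∀ i (g : {j // r j i} → α), (s i \ Set.range g).Nonempty := fun i g =>
    Set.nonempty_of_not_subset fun h =>
      ((hs i).trans ((mk_le_mk_of_subset h).trans mk_range_le)).not_gt
        (Ordinal.card_typein (r := r) i ▸ card_typein_lt i hr)
  choose pick hpick using hfresh
  let f : ι → α := IsWellFounded.fix r fun i IH => pick i fun j => IH j.1 j.2
  have hf : ∀ i, f i = pick i fun j => f j.1 := IsWellFounded.fix_eq r _
  refine ⟨f, fun i j hij => ?_, fun i => hf i ▸ (hpick i _).1⟩
  rcases trichotomous_of r i j with h | h | h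
  · exact ((hpick j (fun k => f k.1)).2 ⟨⟨i, h⟩, hij.trans (hf j)⟩).elim
  · exact h
  · exact ((hpick i (fun k => f k.1)).2 ⟨⟨j, h⟩, hij.symm.trans (hf i)⟩).elim

lemma mk_openScheme_le : #{W : List ℕ → Set (ℕ → ℕ) // OpenScheme inferInstance W} ≤ 𝔠 := by
  let cylindersIn : {W // OpenScheme inferInstance W} → Set (List ℕ × List ℕ) :=
    fun W => {ac | stdS ac.2 ⊆ W.1 ac.1}
  have hinj : Injective cylindersIn := fun W W' h => Subtype.ext <| funext fun a => by
    have key : ∀ c, stdS c ⊆ W.1 a ↔ stdS c ⊆ W'.1 a := fun c => Set.ext_iff.1 h (a, c)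
    refine Set.Subset.antisymm (fun y hy => ?_) (fun y hy => ?_)
    · obtain ⟨n, -, hn⟩ := exists_pre_subset (W.2 a) hy 0
      exact (key _).1 hn (isPre_pre y n)
    · obtain ⟨n, -, hn⟩ := exists_pre_subset (W'.2 a) hy 0
      exact (key _).2 hn (isPre_pre y n)
  calc #{W // OpenScheme inferInstance W} ≤ #(Set (List ℕ × List ℕ)) := mk_le_of_injective hinj
    _ = 𝔠 := by rw [mk_set, mk_eq_aleph0, two_power_aleph0]

abbrev RegularPiBaseScheme : Type :=
  {W : List ℕ → Set (ℕ → ℕ) // RegularScheme W ∧ PiBaseScheme inferInstance W}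

theorem exists_injective_pinned_point :
    ∃ g : RegularPiBaseScheme → ℕ → ℕ, Injective g ∧ ∀ W, ∃ p, Pins W.1 p (g W) := by
  refine exists_injective_forall_mem (fun W : RegularPiBaseScheme => {x | ∃ p, Pins W.1 p x})
    fun W => ?_
  obtain ⟨f, hf, hfW⟩ := W.2.2.exists_injective_pins W.2.1
  calc _ ≤ #{W // OpenScheme inferInstance W} := mk_subtype_mono fun _ hW => hW.2.1
    _ ≤ #(ℕ → ℕ) := mk_nat_arrow_nat ▸ mk_openScheme_le
    _ ≤ #{x | ∃ p, Pins W.1 p x} :=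
      mk_le_of_injective (f := fun ε => ⟨f ε, hfW ε⟩) fun _ _ h => hf (congrArg Subtype.val h)

/-- Distinct schemes get distinct pinned points, so the countable sets witnessing that the shoots
escape can be attached to the points themselves. -/
theorem exists_pins_forall_shootSet_inter_nonempty :
    ∃ A : (ℕ → ℕ) → Set (ℕ → ℕ), (∀ x, (A x).Countable ∧ IsClosed (insert x (A x))) ∧
      ∀ W, RegularScheme W → PiBaseScheme inferInstance W →
        ∃ p x, Pins W p x ∧ x ∉ A x ∧ ∀ n k, (shootSet W (pre p n) k ∩ A x).Nonempty := by
  obtain ⟨g, hg, hpins⟩ := exists_injective_pinned_point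
  choose p hp using hpins
  choose A hAc hAx hAcl hA using fun W => (hp W).exists_countable_inter_shootSet_nonempty W.2.1
    W.2.2.1 W.2.2.nonempty
  refine ⟨extend g A fun _ => ∅, fun x => ?_, fun W hreg hW => ?_⟩
  · by_cases hx : ∃ W, g W = x
    · obtain ⟨W, rfl⟩ := hx
      rw [hg.extend_apply]
      exact ⟨hAc W, hAcl W⟩
    · rw [extend_apply' _ _ _ hx]
      exact ⟨Set.countable_empty, by simp⟩
  · let W' : RegularPiBaseScheme := ⟨W, hreg, hW⟩
    refine ⟨p W', g W', hp W', ?_⟩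
    rw [hg.extend_apply]
    exact ⟨hAx W', hA W'⟩

/-- There is a function `F : ω^ω → τ_N \ {∅}` with `Cl_{τ_N}(F(x)) = F(x) ∪ {x}` such that for
every regular open π-base Souslin scheme `W` on the Baire space with nonempty leaves there are
`p, x` with `fruit_p(W) = {x}`, `shoot_{p↾n}(W) ↛ {x} ∪ F(x)` for all `n`, and
`fruit_p(V) = {x}` for every regular semi-open Souslin scheme `V` on the Baire space with
`Int(V, τ_N) = W`. -/
theorem statement13 :
    ∃ F : (ℕ → ℕ) → Set (ℕ → ℕ),
      (∀ x, IsOpen (F x) ∧ (F x).Nonempty) ∧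
      (∀ x, closure (F x) = F x ∪ {x}) ∧
      ∀ W : List ℕ → Set (ℕ → ℕ),
        RegularScheme W →
        PiBaseScheme (inferInstance : TopologicalSpace (ℕ → ℕ)) W →
        NonemptyLeaves W →
        ∃ p x : ℕ → ℕ,
          fruit W p = {x} ∧
          (∀ n : ℕ, ¬ Engulfs (shoot W (pre p n)) ({x} ∪ F x)) ∧
          ∀ V : List ℕ → Set (ℕ → ℕ),
            RegularScheme V →
            SemiOpenScheme (inferInstance : TopologicalSpace (ℕ → ℕ)) V →
            (∀ a : List ℕ, interior (V a) = W a) →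
            fruit V p = {x} := by
  obtain ⟨A, hA, hpins⟩ := exists_pins_forall_shootSet_inter_nonempty
  choose F hFo hFne hFcl hFA using fun x =>
    exists_isOpen_closure_eq_union_singleton (hA x).1 (hA x).2
  refine ⟨F, fun x => ⟨hFo x, hFne x⟩, hFcl, fun W hreg hW _ => ?_⟩
  obtain ⟨p, x, hpx, hxA, hshoot⟩ := hpins W hreg hW
  refine ⟨p, x, hpx.fruit_eq, fun n => not_engulfs_shoot (hshoot n) ?_,
    fun V _ hV hVW => hpx.fruit_eq_of_interior_eq hV hVW⟩
  rw [Set.singleton_union, Set.disjoint_insert_left]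
  exact ⟨hxA, hFA x⟩
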